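/- Define the three-dimensional vector field G = (G₁, G₂, G₃) on ℝ³ by G₁(H,σ,Φ) := (−24πΦ² − (9/8)(σ² + H²) − (3/4)σH − (1/3)(1 − H²))·(1 − H²), G₂(H,σ,Φ) := (24πΦ² + (9/8)σ² − (9/4)Hσ − (1/3)(1 − H²) − (15/8)H²) + Hσ·(24πΦ² + (9/8)(σ² + H²) + (3/4)Hσ + (1/3)(1 − H²)), G₃(H,σ,Φ) := (24πΦ² + (9/8)(σ² + H²) + (3/4)Hσ + (1/3)(1 − H²))·HΦ − 3HΦ, and let f₂(s) := (1/(8√π))·√(−3s² + 2s + 5) for −1 ≤ s ≤ 5/3. Then for every s ∈ [−1, 5/3] the points (−1, s, f₂(s)) and (−1, s, −f₂(s)) are equilibrium points of G, i.e. G(−1, s, ±f₂(s)) = (0, 0, 0). -/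

import Mathlib

open Real

/-- First component of the compactified scalar-field vector field. -/
noncomputable def G₁ (H σ Φ : ℝ) : ℝ :=
  (-24 * π * Φ ^ 2 - (9 / 8) * (σ ^ 2 + H ^ 2) - (3 / 4) * (σ * H)
      - (1 / 3) * (1 - H ^ 2)) * (1 - H ^ 2)

/-- Second component of the compactified scalar-field vector field. -/
noncomputable def G₂ (H σ Φ : ℝ) : ℝ :=
  (24 * π * Φ ^ 2 + (9 / 8) * σ ^ 2 - (9 / 4) * (H * σ) - (1 / 3) * (1 - H ^ 2)
      - (15 / 8) * H ^ 2)
    + H * σ * (24 * π * Φ ^ 2 + (9 / 8) * (σ ^ 2 + H ^ 2) + (3 / 4) * (H * σ)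
      + (1 / 3) * (1 - H ^ 2))

/-- Third component of the compactified scalar-field vector field. -/
noncomputable def G₃ (H σ Φ : ℝ) : ℝ :=
  (24 * π * Φ ^ 2 + (9 / 8) * (σ ^ 2 + H ^ 2) + (3 / 4) * (H * σ)
      + (1 / 3) * (1 - H ^ 2)) * (H * Φ) - 3 * (H * Φ)

/-- The profile `f₂` of the fixed-point curves at the past boundary. -/
noncomputable def f₂ (s : ℝ) : ℝ :=
  (1 / (8 * Real.sqrt π)) * Real.sqrt (-3 * s ^ 2 + 2 * s + 5)

/-! At `H = -1` the factor `1 - H²` kills `G₁`, while `G₂` and `G₃` factor as `(1 - σ) C` and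
`-Φ C` with `C = 24πΦ² - (3/8)(-3σ² + 2σ + 5)`. The profile `f₂` is exactly the root of `C` in `Φ`;
it is real because the radicand `(1 + σ)(5 - 3σ)` is nonnegative on `[-1, 5/3]`. -/

lemma G₁_neg_one (σ Φ : ℝ) : G₁ (-1) σ Φ = 0 := by
  simp only [G₁]; ring

lemma G₂_neg_one (σ Φ : ℝ) :
    G₂ (-1) σ Φ = (1 - σ) * (24 * π * Φ ^ 2 - 3 / 8 * (-3 * σ ^ 2 + 2 * σ + 5)) := by
  simp only [G₂]; ring

lemma G₃_neg_one (σ Φ : ℝ) :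
    G₃ (-1) σ Φ = -Φ * (24 * π * Φ ^ 2 - 3 / 8 * (-3 * σ ^ 2 + 2 * σ + 5)) := by
  simp only [G₃]; ring

lemma G_neg_one_eq_zero {σ Φ : ℝ} (h : 24 * π * Φ ^ 2 = 3 / 8 * (-3 * σ ^ 2 + 2 * σ + 5)) :
    G₁ (-1) σ Φ = 0 ∧ G₂ (-1) σ Φ = 0 ∧ G₃ (-1) σ Φ = 0 := by
  rw [G₁_neg_one, G₂_neg_one, G₃_neg_one, h, sub_self, mul_zero, mul_zero]
  exact ⟨rfl, rfl, rfl⟩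

lemma pi_mul_f₂_sq {s : ℝ} (hq : 0 ≤ -3 * s ^ 2 + 2 * s + 5) :
    24 * π * f₂ s ^ 2 = 3 / 8 * (-3 * s ^ 2 + 2 * s + 5) := by
  rw [f₂, mul_pow, Real.sq_sqrt hq, div_pow, mul_pow, Real.sq_sqrt Real.pi_pos.le]
  field_simp
  ring

/-- For every `s ∈ [−1, 5/3]`, the points `(−1, s, ±f₂(s))` are equilibrium points of the
compactified Einstein–scalar-field vector field `G = (G₁, G₂, G₃)`. -/
theorem fixed_point_curves_past_boundary :
    ∀ s ∈ Set.Icc (-1 : ℝ) (5 / 3),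
      (G₁ (-1) s (f₂ s) = 0 ∧ G₂ (-1) s (f₂ s) = 0 ∧ G₃ (-1) s (f₂ s) = 0) ∧
      (G₁ (-1) s (-f₂ s) = 0 ∧ G₂ (-1) s (-f₂ s) = 0 ∧ G₃ (-1) s (-f₂ s) = 0) := by
  intro s ⟨hs₁, hs₂⟩
  have hf : 24 * π * f₂ s ^ 2 = 3 / 8 * (-3 * s ^ 2 + 2 * s + 5) :=
    pi_mul_f₂_sq (by nlinarith)
  exact ⟨G_neg_one_eq_zero hf, G_neg_one_eq_zero (by rwa [neg_sq])⟩
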